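/- Interpolation property of Weyl numbers: let 0 < θ < 1, let X, Y, Y₀, Y₁ be Banach spaces with Y₀ ∩ Y₁ continuously embedded in Y, and suppose there is C > 0 such that ‖y‖_Y ≤ C · ‖y‖_{Y₀}^{1−θ} · ‖y‖_{Y₁}^{θ} for all y ∈ Y₀ ∩ Y₁. If T is bounded from X to Y₀, to Y₁, and to Y (with range of T contained in Y₀ ∩ Y₁), then for all n, m ∈ ℕ: x_{n+m−1}(T : X → Y) ≤ C · x_n(T : X → Y₀)^{1−θ} · x_m(T : X → Y₁)^{θ}. -/

import Mathlib

/-!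
Fix `A : ℓ₂ → X` with `‖A‖ ≤ 1` and approximants `G₀`, `G₁` of `T₀ A`, `T₁ A` of ranks `< n`,
`< m` that are optimal up to `ε`. On `K = ker G₀ ⊓ ker G₁`, a closed subspace of codimension
`≤ n + m - 2`, the interpolation inequality gives
`‖T A u‖ ≤ C ‖T₀ A - G₀‖ ^ (1 - θ) ‖T₁ A - G₁‖ ^ θ ‖u‖`. Because `ℓ₂` is a Hilbert space, `K`
has an orthogonal projection `P`, and `T A (1 - P)` is an approximant of rank `< n + m - 1` with
error `T A P`, bounded by the same constant. Then let `ε → 0`.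
-/

noncomputable section

open scoped ENNReal

/-- The `n`-th approximation number. -/
def approxNumber {X Y : Type*} [NormedAddCommGroup X] [NormedSpace ℝ X]
    [NormedAddCommGroup Y] [NormedSpace ℝ Y] (n : ℕ) (T : X →L[ℝ] Y) : ℝ :=
  sInf {c : ℝ | ∃ A : X →L[ℝ] Y, FiniteDimensional ℝ (LinearMap.range (A : X →ₗ[ℝ] Y)) ∧
    Module.finrank ℝ (LinearMap.range (A : X →ₗ[ℝ] Y)) < n ∧ ‖T - A‖ = c}

/-- The Hilbert sequence space `ℓ₂`. -/
abbrev Ell2 : Type := lp (fun _ : ℕ => ℝ) 2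

/-- The `n`-th Weyl number. -/
def weylNumber {X Y : Type*} [NormedAddCommGroup X] [NormedSpace ℝ X]
    [NormedAddCommGroup Y] [NormedSpace ℝ Y] (n : ℕ) (T : X →L[ℝ] Y) : ℝ :=
  ⨆ A : {A : Ell2 →L[ℝ] X // ‖A‖ ≤ 1}, approxNumber n (T.comp A.1)

open Module LinearMap

section ApproxNumber

variable {X Y : Type*} [NormedAddCommGroup X] [NormedSpace ℝ X]
  [NormedAddCommGroup Y] [NormedSpace ℝ Y]

def approxErrors (n : ℕ) (T : X →L[ℝ] Y) : Set ℝ :=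
  {c : ℝ | ∃ A : X →L[ℝ] Y, FiniteDimensional ℝ (range (A : X →ₗ[ℝ] Y)) ∧
    finrank ℝ (range (A : X →ₗ[ℝ] Y)) < n ∧ ‖T - A‖ = c}

theorem bddBelow_approxErrors (n : ℕ) (T : X →L[ℝ] Y) : BddBelow (approxErrors n T) :=
  ⟨0, fun _ ⟨_, _, _, hc⟩ => hc ▸ norm_nonneg _⟩

theorem approxNumber_nonneg (n : ℕ) (T : X →L[ℝ] Y) : 0 ≤ approxNumber n T :=
  Real.sInf_nonneg fun _ ⟨_, _, _, hc⟩ => hc ▸ norm_nonneg _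

theorem approxNumber_le_norm_sub {n : ℕ} (T A : X →L[ℝ] Y)
    [FiniteDimensional ℝ (range (A : X →ₗ[ℝ] Y))]
    (hA : finrank ℝ (range (A : X →ₗ[ℝ] Y)) < n) :
    approxNumber n T ≤ ‖T - A‖ :=
  csInf_le (bddBelow_approxErrors n T) ⟨A, inferInstance, hA, rfl⟩

instance : FiniteDimensional ℝ (range ((0 : X →L[ℝ] Y) : X →ₗ[ℝ] Y)) := by
  rw [ContinuousLinearMap.toLinearMap_zero, range_zero]
  infer_instance

theorem finrank_range_zero_lt {n : ℕ} (hn : 1 ≤ n) :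
    finrank ℝ (range ((0 : X →L[ℝ] Y) : X →ₗ[ℝ] Y)) < n := by
  rw [ContinuousLinearMap.toLinearMap_zero, range_zero, finrank_bot]
  omega

theorem approxNumber_le_norm {n : ℕ} (hn : 1 ≤ n) (T : X →L[ℝ] Y) : approxNumber n T ≤ ‖T‖ := by
  simpa using approxNumber_le_norm_sub T 0 (finrank_range_zero_lt hn)

theorem exists_norm_sub_lt_approxNumber_add {n : ℕ} (hn : 1 ≤ n) (T : X →L[ℝ] Y) {ε : ℝ}
    (hε : 0 < ε) :
    ∃ A : X →L[ℝ] Y, FiniteDimensional ℝ (range (A : X →ₗ[ℝ] Y)) ∧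
      finrank ℝ (range (A : X →ₗ[ℝ] Y)) < n ∧ ‖T - A‖ < approxNumber n T + ε := by
  have hne : (approxErrors n T).Nonempty :=
    ⟨‖T‖, 0, inferInstance, finrank_range_zero_lt hn, by rw [sub_zero]⟩
  obtain ⟨_, ⟨A, hfin, hrank, rfl⟩, hlt⟩ := Real.lt_sInf_add_pos hne hε
  exact ⟨A, hfin, hrank, hlt⟩

instance : Nonempty {A : Ell2 →L[ℝ] X // ‖A‖ ≤ 1} := ⟨⟨0, by simp⟩⟩

theorem approxNumber_comp_le_weylNumber {n : ℕ} (hn : 1 ≤ n) (T : X →L[ℝ] Y)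
    {A : Ell2 →L[ℝ] X} (hA : ‖A‖ ≤ 1) : approxNumber n (T.comp A) ≤ weylNumber n T := by
  refine le_ciSup (f := fun A : {A : Ell2 →L[ℝ] X // ‖A‖ ≤ 1} => approxNumber n (T.comp A.1))
    ⟨‖T‖, ?_⟩ ⟨A, hA⟩
  rintro _ ⟨⟨B, hB⟩, rfl⟩
  calc approxNumber n (T.comp B) ≤ ‖T.comp B‖ := approxNumber_le_norm hn _
    _ ≤ ‖T‖ * ‖B‖ := T.opNorm_comp_le B
    _ ≤ ‖T‖ := mul_le_of_le_one_right (norm_nonneg T) hB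

end ApproxNumber

theorem rpow_one_sub_mul_rpow_le {θ p q α β r : ℝ} (hθ₀ : 0 ≤ θ) (hθ₁ : θ ≤ 1) (hp : 0 ≤ p)
    (hq : 0 ≤ q) (hα : 0 ≤ α) (hβ : 0 ≤ β) (hr : 0 ≤ r) (hpα : p ≤ α * r) (hqβ : q ≤ β * r) :
    p ^ (1 - θ) * q ^ θ ≤ α ^ (1 - θ) * β ^ θ * r := by
  calc p ^ (1 - θ) * q ^ θ ≤ (α * r) ^ (1 - θ) * (β * r) ^ θ := by gcongr
    _ = α ^ (1 - θ) * β ^ θ * (r ^ (1 - θ) * r ^ θ) := by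
      rw [Real.mul_rpow hα hr, Real.mul_rpow hβ hr]
      ring
    _ = α ^ (1 - θ) * β ^ θ * r := by
      rw [← Real.rpow_add' hr (by norm_num), sub_add_cancel, Real.rpow_one]

theorem le_mul_rpow_mul_rpow_of_forall_pos {x C a b θ : ℝ} (hθ₀ : 0 ≤ θ) (hθ₁ : θ ≤ 1)
    (h : ∀ ε > 0, x ≤ C * (a + ε) ^ (1 - θ) * (b + ε) ^ θ) : x ≤ C * a ^ (1 - θ) * b ^ θ := by
  have hθ' : 0 ≤ 1 - θ := by linarith
  have hcont : ContinuousAt (fun ε : ℝ => C * (a + ε) ^ (1 - θ) * (b + ε) ^ θ) 0 :=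
    (continuousAt_const.mul ((continuousAt_const.add continuousAt_id).rpow_const (.inr hθ'))).mul
      ((continuousAt_const.add continuousAt_id).rpow_const (.inr hθ₀))
  refine ge_of_tendsto (x := nhdsWithin 0 (Set.Ioi 0)) ?_ (eventually_mem_nhdsWithin.mono h)
  simpa using hcont.tendsto.mono_left nhdsWithin_le_nhds

section KerInfKer

variable {R V W₀ W₁ : Type*} [DivisionRing R] [AddCommGroup V] [Module R V]
  [AddCommGroup W₀] [Module R W₀] [AddCommGroup W₁] [Module R W₁]
  (f₀ : V →ₗ[R] W₀) (f₁ : V →ₗ[R] W₁)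

def quotientKerInfKerEquivRange :
    (V ⧸ (ker f₀ ⊓ ker f₁)) ≃ₗ[R] range (f₀.rangeRestrict.prod f₁.rangeRestrict) :=
  (Submodule.quotEquivOfEq _ _ (by rw [ker_prod, ker_rangeRestrict, ker_rangeRestrict])).trans
    (quotKerEquivRange _)

variable [FiniteDimensional R (range f₀)] [FiniteDimensional R (range f₁)]

theorem finiteDimensional_quotient_ker_inf_ker : FiniteDimensional R (V ⧸ (ker f₀ ⊓ ker f₁)) :=
  (quotientKerInfKerEquivRange f₀ f₁).symm.finiteDimensional

theorem finrank_quotient_ker_inf_ker_le :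
    finrank R (V ⧸ (ker f₀ ⊓ ker f₁)) ≤ finrank R (range f₀) + finrank R (range f₁) := by
  rw [(quotientKerInfKerEquivRange f₀ f₁).finrank_eq, ← finrank_prod]
  exact Submodule.finrank_le _

end KerInfKer

section Hilbert

variable {H Y Y₀ Y₁ : Type*} [NormedAddCommGroup H] [InnerProductSpace ℝ H]
  [NormedAddCommGroup Y] [NormedSpace ℝ Y] [NormedAddCommGroup Y₀] [NormedSpace ℝ Y₀]
  [NormedAddCommGroup Y₁] [NormedSpace ℝ Y₁]

theorem approxNumber_le_of_norm_apply_le {n : ℕ} {M : ℝ} (S : H →L[ℝ] Y) (K : Submodule ℝ H)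
    [K.HasOrthogonalProjection] [FiniteDimensional ℝ Kᗮ] (hK : finrank ℝ Kᗮ < n) (hM : 0 ≤ M)
    (hS : ∀ u ∈ K, ‖S u‖ ≤ M * ‖u‖) : approxNumber n S ≤ M := by
  set F := S.comp Kᗮ.starProjection
  have hrange : range (F : H →ₗ[ℝ] Y) ≤ Kᗮ.map (S : H →ₗ[ℝ] Y) := by
    rintro _ ⟨x, rfl⟩
    exact ⟨_, Kᗮ.starProjection_apply_mem x, rfl⟩
  have : FiniteDimensional ℝ (range (F : H →ₗ[ℝ] Y)) := Submodule.finiteDimensional_of_le hrange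
  have hF : finrank ℝ (range (F : H →ₗ[ℝ] Y)) < n :=
    ((Submodule.finrank_mono hrange).trans (Submodule.finrank_map_le _ _)).trans_lt hK
  refine (approxNumber_le_norm_sub S F hF).trans (ContinuousLinearMap.opNorm_le_bound _ hM ?_)
  intro x
  have hx : (S - F) x = S (K.starProjection x) := by
    rw [← K.starProjection_add_starProjection_orthogonal x]
    simp [F]
  calc ‖(S - F) x‖ ≤ M * ‖K.starProjection x‖ := hx ▸ hS _ (K.starProjection_apply_mem x)
    _ ≤ M * ‖x‖ := by gcongr; exact K.norm_starProjection_apply_le x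

section Orthogonal

variable [CompleteSpace H] (G₀ : H →L[ℝ] Y₀) (G₁ : H →L[ℝ] Y₁)

instance : (ker (G₀ : H →ₗ[ℝ] Y₀) ⊓ ker (G₁ : H →ₗ[ℝ] Y₁)).HasOrthogonalProjection :=
  have : CompleteSpace ↥(ker (G₀ : H →ₗ[ℝ] Y₀) ⊓ ker (G₁ : H →ₗ[ℝ] Y₁)) :=
    (G₀.isClosed_ker.inter G₁.isClosed_ker).completeSpace_coe
  inferInstance

def orthogonalKerInfKerEquivQuotient :
    (ker (G₀ : H →ₗ[ℝ] Y₀) ⊓ ker (G₁ : H →ₗ[ℝ] Y₁))ᗮ ≃ₗ[ℝ]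
      H ⧸ (ker (G₀ : H →ₗ[ℝ] Y₀) ⊓ ker (G₁ : H →ₗ[ℝ] Y₁)) :=
  (Submodule.quotientEquivOfIsCompl _ _ (Submodule.isCompl_orthogonal _)).symm

variable [FiniteDimensional ℝ (range (G₀ : H →ₗ[ℝ] Y₀))]
  [FiniteDimensional ℝ (range (G₁ : H →ₗ[ℝ] Y₁))]

instance : FiniteDimensional ℝ (ker (G₀ : H →ₗ[ℝ] Y₀) ⊓ ker (G₁ : H →ₗ[ℝ] Y₁))ᗮ :=
  have := finiteDimensional_quotient_ker_inf_ker (G₀ : H →ₗ[ℝ] Y₀) (G₁ : H →ₗ[ℝ] Y₁)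
  (orthogonalKerInfKerEquivQuotient G₀ G₁).symm.finiteDimensional

theorem finrank_orthogonal_ker_inf_ker_le :
    finrank ℝ (ker (G₀ : H →ₗ[ℝ] Y₀) ⊓ ker (G₁ : H →ₗ[ℝ] Y₁))ᗮ ≤
      finrank ℝ (range (G₀ : H →ₗ[ℝ] Y₀)) + finrank ℝ (range (G₁ : H →ₗ[ℝ] Y₁)) :=
  (orthogonalKerInfKerEquivQuotient G₀ G₁).finrank_eq ▸ finrank_quotient_ker_inf_ker_le _ _

end Orthogonal

variable [CompleteSpace H] {θ C : ℝ} (hθ₀ : 0 ≤ θ) (hθ₁ : θ ≤ 1) (hC : 0 ≤ C)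
  {S : H →L[ℝ] Y} {S₀ : H →L[ℝ] Y₀} {S₁ : H →L[ℝ] Y₁}
  (hS : ∀ u, ‖S u‖ ≤ C * ‖S₀ u‖ ^ (1 - θ) * ‖S₁ u‖ ^ θ)
include hθ₀ hθ₁ hC hS

theorem approxNumber_add_sub_one_le_of_approximants {n m : ℕ} (G₀ : H →L[ℝ] Y₀)
    (G₁ : H →L[ℝ] Y₁) [FiniteDimensional ℝ (range (G₀ : H →ₗ[ℝ] Y₀))]
    [FiniteDimensional ℝ (range (G₁ : H →ₗ[ℝ] Y₁))]
    (hG₀ : finrank ℝ (range (G₀ : H →ₗ[ℝ] Y₀)) < n)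
    (hG₁ : finrank ℝ (range (G₁ : H →ₗ[ℝ] Y₁)) < m) :
    approxNumber (n + m - 1) S ≤ C * ‖S₀ - G₀‖ ^ (1 - θ) * ‖S₁ - G₁‖ ^ θ := by
  have hK := finrank_orthogonal_ker_inf_ker_le G₀ G₁
  refine approxNumber_le_of_norm_apply_le S (ker (G₀ : H →ₗ[ℝ] Y₀) ⊓ ker (G₁ : H →ₗ[ℝ] Y₁))
    (by omega) (by positivity) fun u hu => ?_
  have h₀ : ‖S₀ u‖ ≤ ‖S₀ - G₀‖ * ‖u‖ := by
    simpa [show G₀ u = 0 from hu.1] using (S₀ - G₀).le_opNorm u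
  have h₁ : ‖S₁ u‖ ≤ ‖S₁ - G₁‖ * ‖u‖ := by
    simpa [show G₁ u = 0 from hu.2] using (S₁ - G₁).le_opNorm u
  calc ‖S u‖ ≤ C * (‖S₀ u‖ ^ (1 - θ) * ‖S₁ u‖ ^ θ) := by rw [← mul_assoc]; exact hS u
    _ ≤ C * (‖S₀ - G₀‖ ^ (1 - θ) * ‖S₁ - G₁‖ ^ θ * ‖u‖) := by
      gcongr C * ?_
      exact rpow_one_sub_mul_rpow_le hθ₀ hθ₁ (norm_nonneg _) (norm_nonneg _) (norm_nonneg _)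
        (norm_nonneg _) (norm_nonneg _) h₀ h₁
    _ = C * ‖S₀ - G₀‖ ^ (1 - θ) * ‖S₁ - G₁‖ ^ θ * ‖u‖ := by ring

theorem approxNumber_add_sub_one_le {n m : ℕ} (hn : 1 ≤ n) (hm : 1 ≤ m) :
    approxNumber (n + m - 1) S ≤ C * approxNumber n S₀ ^ (1 - θ) * approxNumber m S₁ ^ θ := by
  refine le_mul_rpow_mul_rpow_of_forall_pos hθ₀ hθ₁ fun ε hε => ?_
  obtain ⟨G₀, _, hG₀, h₀⟩ := exists_norm_sub_lt_approxNumber_add hn S₀ hε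
  obtain ⟨G₁, _, hG₁, h₁⟩ := exists_norm_sub_lt_approxNumber_add hm S₁ hε
  have ha : 0 ≤ approxNumber n S₀ + ε := by linarith [approxNumber_nonneg n S₀]
  calc approxNumber (n + m - 1) S ≤ C * ‖S₀ - G₀‖ ^ (1 - θ) * ‖S₁ - G₁‖ ^ θ :=
        approxNumber_add_sub_one_le_of_approximants hθ₀ hθ₁ hC hS G₀ G₁ hG₀ hG₁
    _ ≤ C * (approxNumber n S₀ + ε) ^ (1 - θ) * (approxNumber m S₁ + ε) ^ θ := by
      gcongr

end Hilbert

/-- `Y₀ ∩ Y₁ ↪ Y` is modelled by `j₀`, `j₁`: a point of the intersection is a pair with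
`j₀ y₀ = j₁ y₁`; `T₀`, `T₁` are `T` viewed as operators into `Y₀`, `Y₁`. -/
theorem weyl_interpolation_general
    {X Y Y₀ Y₁ : Type*}
    [NormedAddCommGroup X] [NormedSpace ℝ X]
    [NormedAddCommGroup Y] [NormedSpace ℝ Y]
    [NormedAddCommGroup Y₀] [NormedSpace ℝ Y₀]
    [NormedAddCommGroup Y₁] [NormedSpace ℝ Y₁]
    (θ : ℝ) (hθ₀ : 0 < θ) (hθ₁ : θ < 1) (C : ℝ) (hC : 0 < C)
    (j₀ : Y₀ →L[ℝ] Y) (j₁ : Y₁ →L[ℝ] Y)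
    (hnorm : ∀ (y₀ : Y₀) (y₁ : Y₁), j₀ y₀ = j₁ y₁ →
      ‖j₀ y₀‖ ≤ C * ‖y₀‖ ^ (1 - θ) * ‖y₁‖ ^ θ)
    (T : X →L[ℝ] Y) (T₀ : X →L[ℝ] Y₀) (T₁ : X →L[ℝ] Y₁)
    (hT₀ : ∀ x, T x = j₀ (T₀ x)) (hT₁ : ∀ x, T x = j₁ (T₁ x))
    (n m : ℕ) (hn : 1 ≤ n) (hm : 1 ≤ m) :
    weylNumber (n + m - 1) T ≤ C * weylNumber n T₀ ^ (1 - θ) * weylNumber m T₁ ^ θ := by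
  refine ciSup_le fun ⟨A, hA⟩ => ?_
  have hTA : ∀ u, ‖T (A u)‖ ≤ C * ‖T₀ (A u)‖ ^ (1 - θ) * ‖T₁ (A u)‖ ^ θ := fun u => by
    rw [hT₀]
    exact hnorm _ _ (by rw [← hT₀, ← hT₁])
  calc approxNumber (n + m - 1) (T.comp A)
      ≤ C * approxNumber n (T₀.comp A) ^ (1 - θ) * approxNumber m (T₁.comp A) ^ θ :=
        approxNumber_add_sub_one_le hθ₀.le hθ₁.le hC.le hTA hn hm
    _ ≤ C * weylNumber n T₀ ^ (1 - θ) * weylNumber m T₁ ^ θ := by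
      have h₀ := approxNumber_comp_le_weylNumber hn T₀ hA
      have h₁ := approxNumber_comp_le_weylNumber hm T₁ hA
      have ha := approxNumber_nonneg n (T₀.comp A)
      have := approxNumber_nonneg m (T₁.comp A)
      have := ha.trans h₀
      gcongr

/-- Interpolation property of Weyl numbers. We model the situation
`Y₀ ∩ Y₁ ↪ Y` by continuous linear maps `j₀ : Y₀ → Y`, `j₁ : Y₁ → Y`; the
operator `T : X → Y` factors through `Y₀` and through `Y₁` (via `T₀`, `T₁`),
and on the intersection `‖y‖_Y ≤ C ‖y‖_{Y₀}^{1-θ} ‖y‖_{Y₁}^{θ}`. Then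
`x_{n+m-1}(T : X → Y) ≤ C · x_n(T : X → Y₀)^{1-θ} · x_m(T : X → Y₁)^{θ}`. -/
theorem weyl_interpolation
    {X Y Y₀ Y₁ : Type*}
    [NormedAddCommGroup X] [NormedSpace ℝ X] [CompleteSpace X]
    [NormedAddCommGroup Y] [NormedSpace ℝ Y] [CompleteSpace Y]
    [NormedAddCommGroup Y₀] [NormedSpace ℝ Y₀] [CompleteSpace Y₀]
    [NormedAddCommGroup Y₁] [NormedSpace ℝ Y₁] [CompleteSpace Y₁]
    (θ : ℝ) (hθ₀ : 0 < θ) (hθ₁ : θ < 1) (C : ℝ) (hC : 0 < C)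
    (j₀ : Y₀ →L[ℝ] Y) (j₁ : Y₁ →L[ℝ] Y)
    (hnorm : ∀ (y₀ : Y₀) (y₁ : Y₁), j₀ y₀ = j₁ y₁ →
      ‖j₀ y₀‖ ≤ C * ‖y₀‖ ^ (1 - θ) * ‖y₁‖ ^ θ)
    (T : X →L[ℝ] Y) (T₀ : X →L[ℝ] Y₀) (T₁ : X →L[ℝ] Y₁)
    (hT₀ : ∀ x, T x = j₀ (T₀ x)) (hT₁ : ∀ x, T x = j₁ (T₁ x))
    (n m : ℕ) (hn : 1 ≤ n) (hm : 1 ≤ m) :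
    weylNumber (n + m - 1) T ≤ C * weylNumber n T₀ ^ (1 - θ) * weylNumber m T₁ ^ θ :=
  weyl_interpolation_general θ hθ₀ hθ₁ C hC j₀ j₁ hnorm T T₀ T₁ hT₀ hT₁ n m hn hm
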